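/- Every candidate-interval instance is integralizable: if the candidate types R_1,…,R_t present in the instance can be ordered so that for each voter i the set of types containing i is a contiguous interval of the order, then every integer utility vector that is fractional-committee-feasible is also integral-committee-feasible. -/

import Mathlib

/-- Candidate types: non-empty subsets of the voter set `Fin n`. -/
abbrev Typ (n : ℕ) := {S : Finset (Fin n) // S.Nonempty}

/-- Utility of voter `i` under an integral committee `x`. -/
def intUtil {n : ℕ} (x : Typ n → ℕ) (i : Fin n) : ℤ :=
  ∑ R : Typ n, if i ∈ R.1 then (x R : ℤ) else 0

/-- Utility of voter `i` under a fractional committee `x`. -/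
def fracUtil {n : ℕ} (x : Typ n → ℝ) (i : Fin n) : ℝ :=
  ∑ R : Typ n, if i ∈ R.1 then x R else 0

/-- `x` is an integral committee for the instance `(c, k)`. -/
def IsIntCommittee {n : ℕ} (c : Typ n → ℕ) (k : ℕ) (x : Typ n → ℕ) : Prop :=
  (∀ R, x R ≤ c R) ∧ (∑ R : Typ n, x R) ≤ k

/-- `x` is a fractional committee for the instance `(c, k)`. -/
def IsFracCommittee {n : ℕ} (c : Typ n → ℕ) (k : ℕ) (x : Typ n → ℝ) : Prop :=
  (∀ R, 0 ≤ x R) ∧ (∀ R, x R ≤ (c R : ℝ)) ∧ (∑ R : Typ n, x R) ≤ (k : ℝ)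

/-- `u` is integral-committee-feasible in `(c, k)`. -/
def IntFeasible {n : ℕ} (c : Typ n → ℕ) (k : ℕ) (u : Fin n → ℤ) : Prop :=
  ∃ x : Typ n → ℕ, IsIntCommittee c k x ∧ ∀ i, u i ≤ intUtil x i

/-- `u` is fractional-committee-feasible in `(c, k)`. -/
def FracFeasible {n : ℕ} (c : Typ n → ℕ) (k : ℕ) (u : Fin n → ℤ) : Prop :=
  ∃ x : Typ n → ℝ, IsFracCommittee c k x ∧ ∀ i, (u i : ℝ) ≤ fracUtil x i

/-- `(c, k)` is integralizable. -/
def Integralizable {n : ℕ} (c : Typ n → ℕ) (k : ℕ) : Prop :=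
  ∀ u : Fin n → ℤ, FracFeasible c k u → IntFeasible c k u

/-!
Enumerate the present types along `σ` and let `S m` be the mass that a fractional committee `x`
puts on the first `m` positions. Rounding every prefix sum down and taking consecutive
differences yields an integral committee `y` whose mass on any block `[l, r)` of consecutive
positions is `⌊S r⌋ - ⌊S l⌋ ≥ ⌊S r - S l⌋`. A single type receives at most `⌈x R⌉ ≤ c R`, the
whole committee exactly `⌊∑ x⌋ ≤ k`, and since each voter approves a block of consecutive types,
an integer lower bound `u i ≤ S r - S l` on the voter's fractional utility survives the rounding.
-/

open Finset

section FloorIncrement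

variable (a : ℕ → ℝ)

noncomputable def floorIncrement (m : ℕ) : ℤ :=
  ⌊∑ j ∈ range (m + 1), a j⌋ - ⌊∑ j ∈ range m, a j⌋

lemma sum_range_floorIncrement (m : ℕ) :
    ∑ j ∈ range m, floorIncrement a j = ⌊∑ j ∈ range m, a j⌋ := by
  simp [floorIncrement, sum_range_sub (fun j => ⌊∑ i ∈ range j, a i⌋)]

lemma floor_sum_Ico_le_sum_floorIncrement {l r : ℕ} (hlr : l ≤ r) :
    ⌊∑ j ∈ Ico l r, a j⌋ ≤ ∑ j ∈ Ico l r, floorIncrement a j := by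
  rw [sum_Ico_eq_sub _ hlr, sum_Ico_eq_sub _ hlr, sum_range_floorIncrement,
    sum_range_floorIncrement, le_sub_iff_add_le]
  simpa using Int.le_floor_add (∑ j ∈ range r, a j - ∑ j ∈ range l, a j) (∑ j ∈ range l, a j)

lemma floorIncrement_le_ceil (m : ℕ) : floorIncrement a m ≤ ⌈a m⌉ := by
  rw [floorIncrement, sub_le_iff_le_add', sum_range_succ, ← Int.floor_add_intCast]
  exact Int.floor_mono (by gcongr; exact Int.le_ceil _)

variable {a}

lemma floorIncrement_nonneg {m : ℕ} (ha : 0 ≤ a m) : 0 ≤ floorIncrement a m := by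
  rw [floorIncrement, sub_nonneg, sum_range_succ]
  exact Int.floor_mono (le_add_of_nonneg_right ha)

lemma floorIncrement_eq_zero {m : ℕ} (ha : a m = 0) : floorIncrement a m = 0 := by
  simp [floorIncrement, sum_range_succ, ha]

end FloorIncrement

section ConsecutiveRounding

variable {ι : Type*} {s : Finset ι} {σ : ι → ℕ}

lemma sum_filter_comp_eq_sum {M : Type*} [AddCommMonoid M] (hσ : Set.InjOn σ s) {g : ℕ → M}
    (hg : ∀ m ∉ s.image σ, g m = 0) (t : Finset ℕ) :
    ∑ i ∈ s with σ i ∈ t, g (σ i) = ∑ m ∈ t, g m := by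
  rw [← sum_image (hσ.mono (coe_subset.2 (filter_subset _ _)))]
  refine sum_subset (by grind) fun m hmt hm => hg m ?_
  grind

variable (s σ) in
def levelSum (x : ι → ℝ) (m : ℕ) : ℝ :=
  ∑ i ∈ s with σ i = m, x i

lemma levelSum_apply (hσ : Set.InjOn σ s) (x : ι → ℝ) {i : ι} (hi : i ∈ s) :
    levelSum s σ x (σ i) = x i := by
  rw [levelSum, sum_eq_single_of_mem i (by simp [hi])]
  intro j hj hji
  exact absurd (hσ (mem_filter.1 hj).1 hi (mem_filter.1 hj).2) hji

lemma levelSum_eq_zero (x : ι → ℝ) {m : ℕ} (hm : m ∉ s.image σ) : levelSum s σ x m = 0 := by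
  refine sum_eq_zero fun i hi => absurd ?_ hm
  grind

lemma levelSum_nonneg {x : ι → ℝ} (hx : ∀ i ∈ s, 0 ≤ x i) (m : ℕ) : 0 ≤ levelSum s σ x m :=
  sum_nonneg fun i hi => hx i (mem_filter.1 hi).1

theorem exists_consecutive_rounding (hσ : Set.InjOn σ s) {x : ι → ℝ} (hx : ∀ i ∈ s, 0 ≤ x i) :
    ∃ y : ι → ℕ, (∀ i ∉ s, y i = 0) ∧ (∀ i ∈ s, (y i : ℤ) ≤ ⌈x i⌉) ∧
      ∑ i ∈ s, (y i : ℤ) = ⌊∑ i ∈ s, x i⌋ ∧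
      ∀ l r, l ≤ r → ⌊∑ i ∈ s with σ i ∈ Ico l r, x i⌋ ≤ ∑ i ∈ s with σ i ∈ Ico l r, (y i : ℤ) := by
  classical
  set a := levelSum s σ x
  have ha : ∀ m ∉ s.image σ, a m = 0 := fun m hm => levelSum_eq_zero x hm
  have hinc : ∀ m ∉ s.image σ, floorIncrement a m = 0 := fun m hm =>
    floorIncrement_eq_zero (ha m hm)
  set y : ι → ℕ := fun i => if i ∈ s then (floorIncrement a (σ i)).toNat else 0
  have hy : ∀ i ∈ s, (y i : ℤ) = floorIncrement a (σ i) := fun i hi => by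
    simp only [y, if_pos hi]
    exact Int.toNat_of_nonneg (floorIncrement_nonneg (levelSum_nonneg hx _))
  have hsum : ∀ t, ∑ i ∈ s with σ i ∈ t, (y i : ℤ) = ∑ m ∈ t, floorIncrement a m := fun t => by
    rw [← sum_filter_comp_eq_sum hσ hinc]
    exact sum_congr rfl fun i hi => hy i (mem_filter.1 hi).1
  have hx_sum : ∀ t, ∑ i ∈ s with σ i ∈ t, x i = ∑ m ∈ t, a m := fun t => by
    rw [← sum_filter_comp_eq_sum hσ ha]
    exact sum_congr rfl fun i hi => (levelSum_apply hσ x (mem_filter.1 hi).1).symm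
  refine ⟨y, fun i hi => if_neg hi, fun i hi => ?_, ?_, fun l r hlr => ?_⟩
  · rw [hy i hi, ← levelSum_apply hσ x hi]
    exact floorIncrement_le_ceil a (σ i)
  · have hall : ∀ {M : Type} [AddCommMonoid M] (f : ι → M),
        ∑ i ∈ s with σ i ∈ range (s.sup σ + 1), f i = ∑ i ∈ s, f i := fun f =>
      sum_congr (filter_true_of_mem fun i hi =>
        mem_range.2 (Nat.lt_succ_of_le (le_sup hi))) fun _ _ => rfl
    rw [← hall, hsum, sum_range_floorIncrement, ← hall, hx_sum]
  · rw [hsum, hx_sum]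
    exact floor_sum_Ico_le_sum_floorIncrement a hlr

lemma exists_Ico_filter_eq (p : ι → Prop) [DecidablePred p]
    (hp : ∀ i ∈ s, ∀ j ∈ s, ∀ k ∈ s, σ i ≤ σ j → σ j ≤ σ k → p i → p k → p j) :
    ∃ l r, l ≤ r ∧ s.filter p = s.filter (σ · ∈ Ico l r) := by
  rcases (s.filter p).eq_empty_or_nonempty with hempty | hne
  · exact ⟨0, 0, le_rfl, by simpa using hempty⟩
  obtain ⟨i, hi, hmin⟩ := exists_min_image _ σ hne
  obtain ⟨k, hk, hmax⟩ := exists_max_image _ σ hne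
  rw [mem_filter] at hi hk
  refine ⟨σ i, σ k + 1, by grind, filter_congr fun j hj => ?_⟩
  rw [mem_Ico]
  constructor
  · intro hpj
    exact ⟨hmin j (mem_filter.2 ⟨hj, hpj⟩),
      Nat.lt_succ_of_le (hmax j (mem_filter.2 ⟨hj, hpj⟩))⟩
  · rintro ⟨hij, hjk⟩
    exact hp i hi.1 j hj k hk.1 hij (Nat.le_of_lt_succ hjk) hi.2 hk.2

end ConsecutiveRounding

lemma intUtil_eq_sum_filter {n : ℕ} {y : Typ n → ℕ} {s : Finset (Typ n)}
    (hy : ∀ R ∉ s, y R = 0) (i : Fin n) : intUtil y i = ∑ R ∈ s with i ∈ R.1, (y R : ℤ) := by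
  rw [intUtil, sum_filter, ← sum_subset (subset_univ s)]
  intro R _ hR
  simp [hy R hR]

lemma fracUtil_eq_sum_filter {n : ℕ} {x : Typ n → ℝ} {s : Finset (Typ n)}
    (hx : ∀ R ∉ s, x R = 0) (i : Fin n) : fracUtil x i = ∑ R ∈ s with i ∈ R.1, x R := by
  rw [fracUtil, sum_filter, ← sum_subset (subset_univ s)]
  intro R _ hR
  simp [hx R hR]

theorem stmt1 (n : ℕ) (c : Typ n → ℕ) (k : ℕ)
    (hCI : ∃ σ : Typ n → ℕ, Set.InjOn σ {R | 0 < c R} ∧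
      ∀ i : Fin n, ∀ R₁ R₂ R₃ : Typ n, 0 < c R₁ → 0 < c R₂ → 0 < c R₃ →
        σ R₁ ≤ σ R₂ → σ R₂ ≤ σ R₃ → i ∈ R₁.1 → i ∈ R₃.1 → i ∈ R₂.1) :
    Integralizable c k := by
  classical
  obtain ⟨σ, hσ, hconv⟩ := hCI
  rintro u ⟨x, ⟨hx0, hxc, hxk⟩, hxu⟩
  set s : Finset (Typ n) := {R | 0 < c R}
  have hxs : ∀ R ∉ s, x R = 0 := fun R hR =>
    le_antisymm ((hxc R).trans (by simp_all [s])) (hx0 R)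
  obtain ⟨y, hys, hyx, hysum, hyIco⟩ :=
    exists_consecutive_rounding (s := s) (by simpa [s] using hσ) fun R _ => hx0 R
  refine ⟨y, ⟨fun R => ?_, ?_⟩, fun i => ?_⟩
  · by_cases hR : R ∈ s
    · have : (y R : ℤ) ≤ c R := (hyx R hR).trans (Int.ceil_le.2 (by exact_mod_cast hxc R))
      omega
    · simp [hys R hR]
  · rw [← sum_subset (subset_univ s) fun R _ hR => hys R hR]
    rw [← sum_subset (subset_univ s) fun R _ hR => hxs R hR] at hxk
    have : ∑ R ∈ s, (y R : ℤ) ≤ k :=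
      hysum ▸ (Int.floor_le_floor hxk).trans_eq (Int.floor_natCast k)
    exact_mod_cast this
  · obtain ⟨l, r, hlr, hfilter⟩ := exists_Ico_filter_eq (s := s) (σ := σ) (i ∈ ·.1)
      fun R₁ h₁ R₂ h₂ R₃ h₃ => hconv i R₁ R₂ R₃ (by simpa [s] using h₁) (by simpa [s] using h₂)
        (by simpa [s] using h₃)
    have hfloor := hyIco l r hlr
    rw [← hfilter, ← fracUtil_eq_sum_filter hxs] at hfloor
    rw [intUtil_eq_sum_filter hys]
    exact (Int.le_floor.2 (hxu i)).trans hfloor
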